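/- arXiv:0806.4077 — 5 statements merged into one kernel-verified Lean document; each statement's English description precedes it below -/
import Mathlib

section
/- Let Q : ℂ^{r+1} → Matrix (Fin (N+1)) (Fin (N+1)) ℂ be a linear map such that Q x is a symmetric matrix for every x, and define F : ℂ^{r+1} × ℂ^{N+1} → ℂ by F(x,u) = uᵀ (Q x) u. Then the following are equivalent: (a) for every nonzero u ∈ ℂ^{N+1} with F(x,u) = 0 for all x ∈ ℂ^{r+1}, the only x ∈ ℂ^{r+1} with (Q x)·u = 0 is x = 0; (b) for every x ≠ 0 and u ≠ 0 with F(x,u) = 0, the Fréchet derivative of F at (x,u) is a nonzero linear functional. (Condition (a) says that the common zero set of the quadrics is a regular complete intersection; condition (b) says that the Lagrange hypersurface L = {F = 0} ⊂ ℂP^r × ℂP^N is nonsingular.) -/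
/-!
Since `Q x` is symmetric, the differential of `F(x, u) = uᵀ (Q x) u` at `(x, u)` is
`(dx, du) ↦ uᵀ (Q dx) u + 2 duᵀ (Q x) u`. It vanishes exactly when `u` is a common zero of all
the quadrics and `(Q x) u = 0`, so singular points of `{F = 0}` with `x, u ≠ 0` are the same thing
as witnesses that the complete intersection fails to be regular.
-/

open Matrix

theorem Matrix.IsSymm.dotProduct_mulVec_comm {R n : Type*} [CommSemiring R] [Fintype n]
    {M : Matrix n n R} (hM : M.IsSymm) (u v : n → R) : u ⬝ᵥ M *ᵥ v = v ⬝ᵥ M *ᵥ u := by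
  rw [dotProduct_mulVec, ← mulVec_transpose, hM.eq, dotProduct_comm]

section QuadraticPencil

variable {𝕜 E n : Type*} [NontriviallyNormedField 𝕜] [CompleteSpace 𝕜]
  [NormedAddCommGroup E] [NormedSpace 𝕜 E] [FiniteDimensional 𝕜 E] [Fintype n]

theorem fderiv_dotProduct_mulVec_apply (Q : E →ₗ[𝕜] Matrix n n 𝕜) (x dx : E) (u du : n → 𝕜) :
    fderiv 𝕜 (fun q : E × (n → 𝕜) => q.2 ⬝ᵥ Q q.1 *ᵥ q.2) (x, u) (dx, du) =
      u ⬝ᵥ Q dx *ᵥ u + du ⬝ᵥ Q x *ᵥ u + u ⬝ᵥ Q x *ᵥ du := by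
  have hMulVec := (mulVecBilin 𝕜 𝕜 ∘ₗ Q).toContinuousBilinearMap.hasFDerivAt_of_bilinear
    (hasFDerivAt_fst (p := (x, u))) (hasFDerivAt_snd (p := (x, u)))
  have hF : HasFDerivAt (fun q : E × (n → 𝕜) => q.2 ⬝ᵥ Q q.1 *ᵥ q.2) _ (x, u) :=
    (dotProductBilin 𝕜 𝕜).toContinuousBilinearMap.hasFDerivAt_of_bilinear
      (hasFDerivAt_snd (p := (x, u))) hMulVec
  rw [hF.fderiv]
  simp only [ContinuousLinearMap.precompR_apply, ContinuousLinearMap.compL_apply,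
    ContinuousLinearMap.comp_add, LinearMap.toContinuousBilinearMap_apply, LinearMap.coe_comp,
    Function.comp_apply, mulVecBilin_apply, _root_.add_apply, ContinuousLinearMap.comp_apply,
    ContinuousLinearMap.coe_snd', dotProductBilin_apply_apply, ContinuousLinearMap.precompL_apply,
    ContinuousLinearMap.coe_fst']
  ring

theorem fderiv_dotProduct_mulVec_eq_zero_iff [NeZero (2 : 𝕜)] (Q : E →ₗ[𝕜] Matrix n n 𝕜)
    {x : E} (hsymm : (Q x).IsSymm) (u : n → 𝕜) :
    fderiv 𝕜 (fun q : E × (n → 𝕜) => q.2 ⬝ᵥ Q q.1 *ᵥ q.2) (x, u) = 0 ↔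
      (∀ dx, u ⬝ᵥ Q dx *ᵥ u = 0) ∧ Q x *ᵥ u = 0 := by
  have hderiv (dx : E) (du : n → 𝕜) :
      fderiv 𝕜 (fun q : E × (n → 𝕜) => q.2 ⬝ᵥ Q q.1 *ᵥ q.2) (x, u) (dx, du) =
        u ⬝ᵥ Q dx *ᵥ u + 2 * (du ⬝ᵥ Q x *ᵥ u) := by
    rw [fderiv_dotProduct_mulVec_apply, hsymm.dotProduct_mulVec_comm u du]
    ring
  constructor
  · intro h
    refine ⟨fun dx => by simpa [h] using (hderiv dx 0).symm, ?_⟩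
    refine dotProduct_eq_zero _ fun du => ?_
    have htwice : 2 * (du ⬝ᵥ Q x *ᵥ u) = 0 := by simpa [h] using (hderiv 0 du).symm
    rw [dotProduct_comm]
    exact (mul_eq_zero.mp htwice).resolve_left two_ne_zero
  · rintro ⟨hquadrics, hkernel⟩
    refine ContinuousLinearMap.ext fun ⟨dx, du⟩ => ?_
    simp [hderiv, hquadrics, hkernel]

end QuadraticPencil

theorem regularCI_iff_lagrange_nonsingular (r N : ℕ)
    (Q : (Fin (r + 1) → ℂ) →ₗ[ℂ] Matrix (Fin (N + 1)) (Fin (N + 1)) ℂ)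
    (hsymm : ∀ x, (Q x).IsSymm) :
    (∀ u : Fin (N + 1) → ℂ, u ≠ 0 →
        (∀ x : Fin (r + 1) → ℂ, u ⬝ᵥ (Q x).mulVec u = 0) →
        ∀ x : Fin (r + 1) → ℂ, (Q x).mulVec u = 0 → x = 0) ↔
    (∀ p : (Fin (r + 1) → ℂ) × (Fin (N + 1) → ℂ), p.1 ≠ 0 → p.2 ≠ 0 →
        p.2 ⬝ᵥ (Q p.1).mulVec p.2 = 0 →
        fderiv ℂ (fun q : (Fin (r + 1) → ℂ) × (Fin (N + 1) → ℂ) =>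
          q.2 ⬝ᵥ (Q q.1).mulVec q.2) p ≠ 0) := by
  constructor
  · rintro hregular ⟨x, u⟩ hx hu - hsingular
    obtain ⟨hquadrics, hkernel⟩ :=
      (fderiv_dotProduct_mulVec_eq_zero_iff Q (hsymm x) u).mp hsingular
    exact hx (hregular u hu hquadrics x hkernel)
  · intro hnonsingular u hu hquadrics x hkernel
    by_contra hx
    exact hnonsingular (x, u) hx hu (hquadrics x)
      ((fderiv_dotProduct_mulVec_eq_zero_iff Q (hsymm x) u).mpr ⟨hquadrics, hkernel⟩)
end

section
/- Let Q : ℂ^{r+1} → Matrix (Fin n) (Fin n) ℂ be a linear map such that Q x is a symmetric matrix for every x, and let x₀ ∈ ℂ^{r+1} satisfy det(Q x₀) = 0. If the Fréchet derivative at x₀ of the map x ↦ det(Q x) is nonzero (i.e. x₀ is a smooth point of the spectral hypersurface {x : det(Q x) = 0}), then Q x₀ has rank n − 1; equivalently, the kernel of Q x₀ is one-dimensional, so the quadric {u : uᵀ (Q x₀) u = 0} has a single singular point. -/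
open Matrix Module

/-- The determinant, as a continuous multilinear map in the rows. -/
noncomputable def detCM (n : ℕ) : ContinuousMultilinearMap ℂ (fun _ : Fin n => Fin n → ℂ) ℂ :=
  MultilinearMap.mkContinuous
    (Matrix.detRowAlternating (R := ℂ) (n := Fin n)).toMultilinearMap
    (Nat.factorial n : ℝ) (by
      intro m
      show ‖(Matrix.of m).det‖ ≤ _
      rw [Matrix.det_apply]
      calc ‖∑ σ : Equiv.Perm (Fin n), Equiv.Perm.sign σ • ∏ i, Matrix.of m (σ i) i‖
          ≤ ∑ σ : Equiv.Perm (Fin n), ‖Equiv.Perm.sign σ • ∏ i, Matrix.of m (σ i) i‖ :=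
            norm_sum_le _ _
        _ ≤ ∑ _σ : Equiv.Perm (Fin n), ∏ i, ‖m i‖ := by
            refine Finset.sum_le_sum fun σ _ => ?_
            have h1 : ‖Equiv.Perm.sign σ • ∏ i, Matrix.of m (σ i) i‖ = ‖∏ i, m (σ i) i‖ := by
              rcases Int.units_eq_one_or (Equiv.Perm.sign σ) with h | h <;>
                simp [h, Units.smul_def]
            rw [h1, norm_prod]
            calc ∏ i, ‖m (σ i) i‖ ≤ ∏ i, ‖m (σ i)‖ :=
                  Finset.prod_le_prod (fun _ _ => norm_nonneg _)
                    (fun i _ => norm_le_pi_norm (m (σ i)) i)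
              _ = ∏ i, ‖m i‖ := Fintype.prod_equiv σ _ _ (fun i => rfl)
        _ = (Nat.factorial n : ℝ) * ∏ i, ‖m i‖ := by
            rw [Finset.sum_const, Finset.card_univ, Fintype.card_perm, Fintype.card_fin,
              nsmul_eq_mul])

lemma det_updateRow_eq_zero {n : ℕ} (A : Matrix (Fin n) (Fin n) ℂ) (h : A.rank + 2 ≤ n)
    (i : Fin n) (b : Fin n → ℂ) : (A.updateRow i b).det = 0 := by
  rw [← Matrix.exists_vecMul_eq_zero_iff]
  have hK : 2 ≤ finrank ℂ (LinearMap.ker (Aᵀ.mulVecLin)) := by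
    have h1 := LinearMap.finrank_range_add_finrank_ker (Aᵀ.mulVecLin)
    rw [Module.finrank_fin_fun ℂ] at h1
    have h3 : Aᵀ.rank = A.rank := Matrix.rank_transpose A
    unfold Matrix.rank at h3 h
    omega
  set φ := (LinearMap.proj i : (Fin n → ℂ) →ₗ[ℂ] ℂ).comp
    (LinearMap.ker (Aᵀ.mulVecLin)).subtype with hφ
  have hker : LinearMap.ker φ ≠ ⊥ := by
    intro hbot
    have hinj : Function.Injective φ := LinearMap.ker_eq_bot.mp hbot
    have hle := LinearMap.finrank_le_finrank_of_injective hinj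
    rw [finrank_self] at hle
    omega
  obtain ⟨w, hwker, hw0⟩ := Submodule.exists_mem_ne_zero_of_ne_bot hker
  have hvA : (w : Fin n → ℂ) ᵥ* A = 0 := by
    rw [← Matrix.mulVec_transpose]; exact w.2
  have hvi : (w : Fin n → ℂ) i = 0 := hwker
  refine ⟨(w : Fin n → ℂ), ?_, ?_⟩
  · intro hz
    exact hw0 (Subtype.ext hz)
  · have hvv : (w : Fin n → ℂ) ᵥ* A.updateRow i b = (w : Fin n → ℂ) ᵥ* A := by
      ext j
      simp only [Matrix.vecMul, dotProduct]
      refine Finset.sum_congr rfl fun k _ => ?_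
      rcases eq_or_ne k i with rfl | hk
      · rw [hvi]; ring
      · rw [Matrix.updateRow_ne hk]
    rw [hvv, hvA]

theorem corank_one_at_smooth_spectral_point (r n : ℕ)
    (Q : (Fin (r + 1) → ℂ) →ₗ[ℂ] Matrix (Fin n) (Fin n) ℂ)
    (hsymm : ∀ x, (Q x).IsSymm)
    (x₀ : Fin (r + 1) → ℂ) (hdet : (Q x₀).det = 0)
    (hsmooth : fderiv ℂ (fun x => (Q x).det) x₀ ≠ 0) :
    (Q x₀).rank = n - 1 := by
  rcases Nat.eq_zero_or_pos n with hn | hn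
  · subst hn
    simp [Matrix.det_isEmpty] at hdet
  -- rank < n
  have hlt : (Q x₀).rank < n := by
    obtain ⟨v, hv0, hv⟩ := (Matrix.exists_mulVec_eq_zero_iff).mpr hdet
    have hker : LinearMap.ker ((Q x₀).mulVecLin) ≠ ⊥ := by
      intro hbot
      apply hv0
      have : v ∈ LinearMap.ker ((Q x₀).mulVecLin) := hv
      rw [hbot] at this
      simpa using this
    have h1 := LinearMap.finrank_range_add_finrank_ker ((Q x₀).mulVecLin)
    rw [Module.finrank_fin_fun ℂ] at h1
    have h3 : finrank ℂ (LinearMap.ker ((Q x₀).mulVecLin)) ≠ 0 :=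
      fun h0 => hker (Submodule.finrank_eq_zero.mp h0)
    unfold Matrix.rank
    omega
  by_contra hne
  have hle : (Q x₀).rank + 2 ≤ n := by omega
  apply hsmooth
  classical
  let Qlin : (Fin (r + 1) → ℂ) →ₗ[ℂ] (Fin n → Fin n → ℂ) :=
    { toFun := fun x => Q x
      map_add' := fun a b => map_add Q a b
      map_smul' := fun c a => map_smul Q c a }
  let Qc := LinearMap.toContinuousLinearMap Qlin
  have key : ∀ M : Fin n → Fin n → ℂ, detCM n M = (Matrix.of M).det := fun M => by
    rw [show detCM n M = (Matrix.detRowAlternating (R := ℂ) (n := Fin n)).toMultilinearMap M from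
      congrFun (MultilinearMap.coe_mkContinuous _ _ _) M]
    rfl
  have hF : HasFDerivAt (⇑(detCM n) ∘ ⇑Qc)
      (((detCM n).linearDeriv (Qc x₀)).comp Qc) x₀ :=
    ((detCM n).hasFDerivAt (Qc x₀)).comp x₀ Qc.hasFDerivAt
  have hfun : (fun x => (Q x).det) = (⇑(detCM n) ∘ ⇑Qc) :=
    funext fun x => (key (Qc x)).symm
  rw [hfun, hF.fderiv]
  refine ContinuousLinearMap.ext fun v => ?_
  simp only [ContinuousLinearMap.comp_apply, ContinuousLinearMap.zero_apply,
    ContinuousMultilinearMap.linearDeriv_apply]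
  refine Finset.sum_eq_zero fun i _ => ?_
  have hup : Matrix.of (Function.update (Qc x₀) i (Qc v i)) = (Q x₀).updateRow i (Q v i) := rfl
  rw [key, hup]
  exact det_updateRow_eq_zero _ hle i _
end

section
/- Let r ≥ 0 and let Q : ℂ^{r+1} → Matrix (Fin (N+1)) (Fin (N+1)) ℂ be a linear map such that Q x is a symmetric matrix for every x. Assume the spectral hypersurface is nonsingular: for every nonzero x ∈ ℂ^{r+1} with det(Q x) = 0, the Fréchet derivative at x of the map y ↦ det(Q y) is nonzero. Then the common zero set of the quadrics is a regular complete intersection: for every nonzero u ∈ ℂ^{N+1} with uᵀ (Q x) u = 0 for all x ∈ ℂ^{r+1}, the only x ∈ ℂ^{r+1} with (Q x)·u = 0 is x = 0. -/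
/-!
If `Q x *ᵥ u = 0` with `u ≠ 0` and `x ≠ 0`, then `x` lies on the spectral hypersurface
`det Q = 0`, and by Jacobi's formula the differential there is `v ↦ tr (adj (Q x) * Q v)`.
The columns of `adj (Q x)` lie in the kernel of `Q x`, which is the line through `u` as soon as
the adjugate is nonzero; as `adj (Q x)` is symmetric, it is therefore a multiple of `u uᵀ`.
So the differential is a multiple of `v ↦ uᵀ (Q v) u`, which vanishes because `u` lies on all
the quadrics, contradicting the nonsingularity of the spectral hypersurface.
-/

open Matrix

namespace Matrix

variable {n : Type*} [Fintype n]

theorem trace_vecMulVec_mul {R : Type*} [CommSemiring R] (u w : n → R) (B : Matrix n n R) :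
    (vecMulVec u w * B).trace = w ⬝ᵥ B *ᵥ u := by
  rw [vecMulVec_mul, dotProduct_mulVec, dotProduct_comm]
  rfl

variable [DecidableEq n]

theorem det_updateRow_eq_sum_adjugate {R : Type*} [CommRing R] (A : Matrix n n R) (i : n)
    (b : n → R) : (A.updateRow i b).det = ∑ j, A.adjugate j i * b j := by
  rw [← cramer_transpose_apply, cramer_eq_adjugate_mulVec, ← adjugate_transpose]
  rfl

theorem sum_det_updateRow_eq_trace_adjugate_mul {R : Type*} [CommRing R] (A B : Matrix n n R) :
    ∑ i, (A.updateRow i (B i)).det = (A.adjugate * B).trace := by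
  simp only [det_updateRow_eq_sum_adjugate, trace, diag, mul_apply]
  exact Finset.sum_comm

variable {𝕜 : Type*} [NontriviallyNormedField 𝕜]

noncomputable def detRowContinuousMultilinear :
    ContinuousMultilinearMap 𝕜 (fun _ : n => n → 𝕜) 𝕜 where
  toMultilinearMap := (detRowAlternating : (n → 𝕜) [⋀^n]→ₗ[𝕜] 𝕜).toMultilinearMap
  cont := continuous_id.matrix_det

theorem fderiv_det_comp_linearMap_apply {E : Type*} [CompleteSpace 𝕜] [NormedAddCommGroup E]
    [NormedSpace 𝕜 E] [FiniteDimensional 𝕜 E] (Q : E →ₗ[𝕜] Matrix n n 𝕜) (x v : E) :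
    fderiv 𝕜 (fun y => (Q y).det) x v = ((Q x).adjugate * Q v).trace := by
  -- `Matrix n n 𝕜` carries no norm, so differentiate through the rows `n → n → 𝕜`
  let rows : E →L[𝕜] n → n → 𝕜 :=
    LinearMap.toContinuousLinearMap ((ofLinearEquiv 𝕜).symm.toLinearMap ∘ₗ Q)
  have h : HasFDerivAt (fun y => (Q y).det)
      (detRowContinuousMultilinear.linearDeriv (rows x) ∘L rows) x :=
    (detRowContinuousMultilinear.hasFDerivAt (rows x)).comp x rows.hasFDerivAt
  rw [h.fderiv, ← sum_det_updateRow_eq_trace_adjugate_mul, ContinuousLinearMap.comp_apply,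
    ContinuousMultilinearMap.linearDeriv_apply]
  rfl

variable {K : Type*} [Field K] {N : ℕ} {A : Matrix (Fin (N + 1)) (Fin (N + 1)) K}

theorem eq_zero_of_mulVec_eq_zero_of_adjugate_ne_zero {a b : Fin (N + 1)}
    (hab : A.adjugate a b ≠ 0) {w : Fin (N + 1) → K} (hw : A *ᵥ w = 0) (hwa : w a = 0) :
    w = 0 := by
  have hminor : (A.submatrix b.succAbove a.succAbove).det ≠ 0 := by
    rw [adjugate_fin_succ_eq_det_submatrix] at hab
    exact right_ne_zero_of_mul hab
  have hrest : A.submatrix b.succAbove a.succAbove *ᵥ (w ∘ a.succAbove) = 0 := by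
    funext p
    have hrow := congrFun hw (b.succAbove p)
    rw [mulVec, dotProduct, Fin.sum_univ_succAbove _ a, hwa, mul_zero, zero_add] at hrow
    exact hrow
  have hrest_zero := eq_zero_of_mulVec_eq_zero hminor hrest
  funext k
  rcases eq_or_ne k a with rfl | hk
  · exact hwa
  · obtain ⟨q, rfl⟩ := Fin.exists_succAbove_eq hk
    exact congrFun hrest_zero q

theorem exists_adjugate_eq_vecMulVec_of_mulVec_eq_zero {u : Fin (N + 1) → K} (hu : u ≠ 0)
    (hAu : A *ᵥ u = 0) : ∃ c : Fin (N + 1) → K, A.adjugate = vecMulVec u c := by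
  by_cases hadj : A.adjugate = 0
  · exact ⟨0, by rw [hadj, vecMulVec_zero]⟩
  obtain ⟨a, b, hab⟩ : ∃ a b, A.adjugate a b ≠ 0 := by
    by_contra! h
    exact hadj (ext h)
  have hua : u a ≠ 0 := fun h => hu (eq_zero_of_mulVec_eq_zero_of_adjugate_ne_zero hab hAu h)
  have hdet : A.det = 0 := exists_mulVec_eq_zero_iff.mp ⟨u, hu, hAu⟩
  refine ⟨fun j => A.adjugate a j / u a, ext fun i j => ?_⟩
  have hcol : A *ᵥ (fun k => A.adjugate k j) = 0 := by
    funext k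
    simpa [hdet, mul_apply, mulVec, dotProduct] using congrFun (congrFun (mul_adjugate A) k) j
  have hdiff : A *ᵥ ((fun k => A.adjugate k j) - (A.adjugate a j / u a) • u) = 0 := by
    rw [mulVec_sub, mulVec_smul, hcol, hAu, smul_zero, sub_zero]
  have := congrFun (eq_zero_of_mulVec_eq_zero_of_adjugate_ne_zero hab hdiff
    (by simp [field])) i
  simpa [sub_eq_zero, vecMulVec_apply, mul_comm] using this

theorem IsSymm.exists_adjugate_eq_smul_vecMulVec (hA : A.IsSymm) {u : Fin (N + 1) → K}
    (hu : u ≠ 0) (hAu : A *ᵥ u = 0) : ∃ c : K, A.adjugate = c • vecMulVec u u := by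
  obtain ⟨c, hc⟩ := exists_adjugate_eq_vecMulVec_of_mulVec_eq_zero hu hAu
  obtain ⟨a, hua⟩ : ∃ a, u a ≠ 0 := Function.ne_iff.mp hu
  have hsymm : vecMulVec u c = vecMulVec c u := by
    rw [← hc, ← hA.adjugate.eq, hc, transpose_vecMulVec]
  refine ⟨c a / u a, Matrix.ext fun i j => ?_⟩
  have hrow := congrFun (congrFun hsymm a) j
  simp only [hc, smul_apply, vecMulVec_apply, smul_eq_mul] at hrow ⊢
  field_simp
  linear_combination u i * hrow

end Matrix

theorem nonsingular_spectral_implies_regularCI (r N : ℕ)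
    (Q : (Fin (r + 1) → ℂ) →ₗ[ℂ] Matrix (Fin (N + 1)) (Fin (N + 1)) ℂ)
    (hsymm : ∀ x, (Q x).IsSymm)
    (hns : ∀ x : Fin (r + 1) → ℂ, x ≠ 0 → (Q x).det = 0 →
      fderiv ℂ (fun y => (Q y).det) x ≠ 0) :
    ∀ u : Fin (N + 1) → ℂ, u ≠ 0 →
      (∀ x : Fin (r + 1) → ℂ, u ⬝ᵥ (Q x).mulVec u = 0) →
      ∀ x : Fin (r + 1) → ℂ, (Q x).mulVec u = 0 → x = 0 := by
  intro u hu hquad x hxu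
  by_contra hx
  have hdet : (Q x).det = 0 := exists_mulVec_eq_zero_iff.mp ⟨u, hu, hxu⟩
  obtain ⟨c, hc⟩ := (hsymm x).exists_adjugate_eq_smul_vecMulVec hu hxu
  refine hns x hx hdet (ContinuousLinearMap.ext fun v => ?_)
  rw [fderiv_det_comp_linearMap_apply, hc, smul_mul, trace_smul, trace_vecMulVec_mul, hquad,
    smul_zero, _root_.zero_apply]
end

section
/- Let Q : ℝ^{r+1} → Matrix (Fin (N+1)) (Fin (N+1)) ℝ be a linear map such that Q x is a symmetric matrix for every x. Then the index function ind(x) = n⁻(Q x) is locally constant on the complement of the spectral variety: the restriction of x ↦ n⁻(Q x) to the open set {x ∈ ℝ^{r+1} : det(Q x) ≠ 0} is locally constant. -/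
open Matrix

/-- The negative index of inertia of a real symmetric matrix: the number of negative
eigenvalues counted with multiplicity. -/
noncomputable def negInertia {n : ℕ} (A : Matrix (Fin n) (Fin n) ℝ) : ℕ :=
  if h : A.IsHermitian then Fintype.card {i // h.eigenvalues i < 0} else 0

/-!
At a nonsingular symmetric `A`, the spans `W₋`, `W₊` of the eigenvectors with negative and with
positive eigenvalues have complementary dimensions, and `A` is negative definite on `W₋` and
positive definite on `W₊`. Definiteness on a fixed subspace is an open condition on the matrix
(the unit sphere of the subspace is compact), so both persist for every `B` near `A`. For a
symmetric `B`, such a pair of subspaces pins down `n⁻(B) = dim W₋`: a subspace on which `B` is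
negative definite meets the span of the eigenvectors of `B` with eigenvalues `≥ 0` trivially, and
one on which `B` is positive definite meets the span of those with eigenvalues `< 0` trivially.
-/

open Module Topology

variable {ι : Type*} [Fintype ι]

def Matrix.PosDefOn (B : Matrix ι ι ℝ) (W : Submodule ℝ (EuclideanSpace ℝ ι)) : Prop :=
  ∀ v ∈ W, v ≠ 0 → 0 < v ⬝ᵥ B *ᵥ v

namespace Matrix.PosDefOn

variable {B : Matrix ι ι ℝ} {W : Submodule ℝ (EuclideanSpace ℝ ι)}

theorem nonneg (hW : B.PosDefOn W) {v : EuclideanSpace ℝ ι} (hv : v ∈ W) :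
    0 ≤ v ⬝ᵥ B *ᵥ v := by
  rcases eq_or_ne v 0 with rfl | hv0
  · simp
  · exact (hW v hv hv0).le

theorem disjoint (hW : B.PosDefOn W) {F : Submodule ℝ (EuclideanSpace ℝ ι)}
    (hF : ∀ v ∈ F, v ⬝ᵥ B *ᵥ v ≤ 0) : Disjoint W F :=
  Submodule.disjoint_def.mpr fun v hvW hvF => by_contra fun h => (hW v hvW h).not_ge (hF v hvF)

end Matrix.PosDefOn

theorem Matrix.posDefOn_iff_forall_norm_eq_one {B : Matrix ι ι ℝ}
    {W : Submodule ℝ (EuclideanSpace ℝ ι)} :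
    B.PosDefOn W ↔ ∀ v ∈ W, ‖v‖ = 1 → 0 < v ⬝ᵥ B *ᵥ v := by
  refine ⟨fun h v hv hv1 => h v hv (norm_ne_zero_iff.mp (by simp [hv1])), fun h v hv hv0 => ?_⟩
  have hpos : 0 < ‖v‖ := norm_pos_iff.mpr hv0
  have hscale : v ⬝ᵥ B *ᵥ v = ‖v‖ ^ 2 * ((‖v‖⁻¹ • v) ⬝ᵥ B *ᵥ (‖v‖⁻¹ • v)) := by
    simp only [WithLp.ofLp_smul, mulVec_smul, dotProduct_smul, smul_dotProduct, smul_eq_mul]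
    field_simp
  rw [hscale]
  exact mul_pos (by positivity) (h _ (W.smul_mem _ hv) (by simp [norm_smul, hpos.ne']))

theorem Matrix.isOpen_setOf_posDefOn (W : Submodule ℝ (EuclideanSpace ℝ ι)) :
    IsOpen {B : Matrix ι ι ℝ | B.PosDefOn W} := by
  have hK : IsCompact ((W : Set (EuclideanSpace ℝ ι)) ∩ Metric.sphere 0 1) :=
    (isCompact_sphere 0 1).inter_left W.closed_of_finiteDimensional
  have hq : Continuous fun p : Matrix ι ι ℝ × EuclideanSpace ℝ ι => p.2 ⬝ᵥ p.1 *ᵥ p.2 :=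
    have hv := (PiLp.continuous_ofLp 2 _).comp continuous_snd
    hv.dotProduct (continuous_fst.matrix_mulVec hv)
  simp only [posDefOn_iff_forall_norm_eq_one, isOpen_iff_eventually]
  intro B hB
  refine (hK.eventually_forall_of_forall_eventually fun v hv => ?_).mono
    fun B' h v hvW hv1 => h v ⟨hvW, by simpa using hv1⟩
  exact hq.continuousAt.eventually (Ioi_mem_nhds (hB v hv.1 (by simpa using hv.2)))

theorem OrthonormalBasis.finrank_span_image {𝕜 E : Type*} [RCLike 𝕜] [NormedAddCommGroup E]
    [InnerProductSpace 𝕜 E] (b : OrthonormalBasis ι 𝕜 E) (p : ι → Prop) [DecidablePred p] :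
    finrank 𝕜 (Submodule.span 𝕜 (b '' {i | p i})) = Fintype.card {i // p i} := by
  rw [← finrank_span_eq_card (b.orthonormal.linearIndependent.comp _ Subtype.val_injective),
    Set.range_comp, Subtype.range_coe_subtype]

variable [DecidableEq ι]

namespace OrthonormalBasis

theorem repr_eq_zero_of_mem_span {𝕜 E : Type*} [RCLike 𝕜] [NormedAddCommGroup E]
    [InnerProductSpace 𝕜 E] (b : OrthonormalBasis ι 𝕜 E) {s : Set ι} {v : E}
    (hv : v ∈ Submodule.span 𝕜 (b '' s)) {j : ι} (hj : j ∉ s) : b.repr v j = 0 := by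
  have : Submodule.span 𝕜 (b '' s) ≤
      LinearMap.ker ((EuclideanSpace.proj j : EuclideanSpace 𝕜 ι →L[𝕜] 𝕜).toLinearMap ∘ₗ
        b.repr.toLinearEquiv.toLinearMap) := by
    rw [Submodule.span_le]
    rintro _ ⟨i, hi, rfl⟩
    simp [b.repr_self, (ne_of_mem_of_not_mem hi hj).symm]
  simpa using this hv

variable {E : Type*} [NormedAddCommGroup E] [InnerProductSpace ℝ E] (b : OrthonormalBasis ι ℝ E)
  {s : Set ι} {v : E}

theorem sum_mul_repr_sq_nonneg_of_mem_span (hv : v ∈ Submodule.span ℝ (b '' s)) {f : ι → ℝ}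
    (hf : ∀ i ∈ s, 0 ≤ f i) : 0 ≤ ∑ i, f i * b.repr v i ^ 2 := by
  refine Finset.sum_nonneg fun i _ => ?_
  by_cases hi : i ∈ s
  · exact mul_nonneg (hf i hi) (sq_nonneg _)
  · simp [b.repr_eq_zero_of_mem_span hv hi]

theorem sum_mul_repr_sq_pos_of_mem_span (hv : v ∈ Submodule.span ℝ (b '' s)) (hv0 : v ≠ 0)
    {f : ι → ℝ} (hf : ∀ i ∈ s, 0 < f i) : 0 < ∑ i, f i * b.repr v i ^ 2 := by
  obtain ⟨j, hj⟩ : ∃ j, b.repr v j ≠ 0 := by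
    by_contra! h
    exact hv0 (b.repr.map_eq_zero_iff.mp (PiLp.ext h))
  have hjs : j ∈ s := by
    by_contra h
    exact hj (b.repr_eq_zero_of_mem_span hv h)
  refine Finset.sum_pos' (fun i _ => ?_) ⟨j, Finset.mem_univ j, by have := hf j hjs; positivity⟩
  by_cases hi : i ∈ s
  · exact mul_nonneg (hf i hi).le (sq_nonneg _)
  · simp [b.repr_eq_zero_of_mem_span hv hi]

end OrthonormalBasis

namespace Matrix.IsHermitian

variable {A : Matrix ι ι ℝ} (hA : A.IsHermitian) {s : Set ι}
include hA

theorem dotProduct_mulVec_eq_sum (v : EuclideanSpace ℝ ι) :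
    v ⬝ᵥ A *ᵥ v = ∑ i, hA.eigenvalues i * hA.eigenvectorBasis.repr v i ^ 2 := by
  set b := hA.eigenvectorBasis
  have hT := isSymmetric_toEuclideanLin_iff.mpr hA
  have hb : ∀ i, A.toEuclideanLin (b i) = hA.eigenvalues i • b i := fun i => by
    ext1; simp [b, hA.mulVec_eigenvectorBasis]
  calc v ⬝ᵥ A *ᵥ v = inner ℝ v (A.toEuclideanLin v) := by
        rw [EuclideanSpace.inner_eq_star_dotProduct]
        simp only [ofLp_toLpLin, toLin'_apply, star_trivial]
        exact dotProduct_comm _ _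
    _ = ∑ i, inner ℝ v (b i) * inner ℝ (A.toEuclideanLin (b i)) v := by
        rw [← b.sum_inner_mul_inner]
        exact Finset.sum_congr rfl fun i _ => by rw [hT]
    _ = _ := by
        refine Finset.sum_congr rfl fun i _ => ?_
        rw [hb, real_inner_smul_left, real_inner_comm, b.repr_apply_apply]
        ring

theorem dotProduct_mulVec_nonneg_of_mem_span (hs : ∀ i ∈ s, 0 ≤ hA.eigenvalues i)
    {v : EuclideanSpace ℝ ι} (hv : v ∈ Submodule.span ℝ (hA.eigenvectorBasis '' s)) :
    0 ≤ v ⬝ᵥ A *ᵥ v := by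
  rw [hA.dotProduct_mulVec_eq_sum]
  exact hA.eigenvectorBasis.sum_mul_repr_sq_nonneg_of_mem_span hv hs

theorem posDefOn_span (hs : ∀ i ∈ s, 0 < hA.eigenvalues i) :
    A.PosDefOn (Submodule.span ℝ (hA.eigenvectorBasis '' s)) := fun v hv hv0 => by
  rw [hA.dotProduct_mulVec_eq_sum]
  exact hA.eigenvectorBasis.sum_mul_repr_sq_pos_of_mem_span hv hv0 hs

theorem neg_posDefOn_span (hs : ∀ i ∈ s, hA.eigenvalues i < 0) :
    (-A).PosDefOn (Submodule.span ℝ (hA.eigenvectorBasis '' s)) := fun v hv hv0 => by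
  rw [neg_mulVec, dotProduct_neg, hA.dotProduct_mulVec_eq_sum, ← Finset.sum_neg_distrib]
  simp_rw [← neg_mul]
  exact hA.eigenvectorBasis.sum_mul_repr_sq_pos_of_mem_span hv hv0 fun i hi => neg_pos.mpr (hs i hi)

theorem exists_definite_subspaces_of_det_ne_zero (hdet : A.det ≠ 0) :
    ∃ W₁ W₂ : Submodule ℝ (EuclideanSpace ℝ ι), (-A).PosDefOn W₁ ∧ A.PosDefOn W₂ ∧
      finrank ℝ W₁ + finrank ℝ W₂ = Fintype.card ι := by
  have hne : ∀ i, hA.eigenvalues i ≠ 0 := by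
    simpa [hA.det_eq_prod_eigenvalues, Finset.prod_ne_zero_iff] using hdet
  refine ⟨_, _, hA.neg_posDefOn_span (s := {i | hA.eigenvalues i < 0}) fun i hi => hi,
    hA.posDefOn_span (s := {i | ¬ hA.eigenvalues i < 0})
      fun i hi => (hne i).lt_or_gt.resolve_left hi, ?_⟩
  rw [hA.eigenvectorBasis.finrank_span_image, hA.eigenvectorBasis.finrank_span_image,
    Fintype.card_subtype_compl]
  have := Fintype.card_subtype_le fun i => hA.eigenvalues i < 0
  omega

end Matrix.IsHermitian

namespace Matrix.PosDefOn

variable {n : ℕ} {B : Matrix (Fin n) (Fin n) ℝ} {W : Submodule ℝ (EuclideanSpace ℝ (Fin n))}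

theorem finrank_le_negInertia (hB : B.IsHermitian) (hW : (-B).PosDefOn W) :
    finrank ℝ W ≤ negInertia B := by
  have hdisj := hW.disjoint (F := Submodule.span ℝ
    (hB.eigenvectorBasis '' {i | ¬ hB.eigenvalues i < 0})) fun v hv => by
      rw [neg_mulVec, dotProduct_neg, neg_nonpos]
      exact hB.dotProduct_mulVec_nonneg_of_mem_span (fun i hi => not_lt.mp hi) hv
  have hdim := Submodule.finrank_add_finrank_le_of_disjoint hdisj
  rw [hB.eigenvectorBasis.finrank_span_image, Fintype.card_subtype_compl,
    finrank_euclideanSpace] at hdim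
  have := Fintype.card_subtype_le fun i => hB.eigenvalues i < 0
  rw [negInertia, dif_pos hB]
  omega

theorem finrank_add_negInertia_le (hB : B.IsHermitian) (hW : B.PosDefOn W) :
    finrank ℝ W + negInertia B ≤ n := by
  have hdisj := hW.disjoint (F := Submodule.span ℝ
    (hB.eigenvectorBasis '' {i | hB.eigenvalues i < 0})) fun v hv => by
      have := (hB.neg_posDefOn_span fun i hi => hi).nonneg hv
      rwa [neg_mulVec, dotProduct_neg, neg_nonneg] at this
  have hdim := Submodule.finrank_add_finrank_le_of_disjoint hdisj
  rw [hB.eigenvectorBasis.finrank_span_image, finrank_euclideanSpace, Fintype.card_fin] at hdim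
  rwa [negInertia, dif_pos hB]

end Matrix.PosDefOn

theorem negInertia_eq_finrank_of_posDefOn {n : ℕ} {B : Matrix (Fin n) (Fin n) ℝ}
    (hB : B.IsHermitian) {W₁ W₂ : Submodule ℝ (EuclideanSpace ℝ (Fin n))}
    (h₁ : (-B).PosDefOn W₁) (h₂ : B.PosDefOn W₂) (hdim : finrank ℝ W₁ + finrank ℝ W₂ = n) :
    negInertia B = finrank ℝ W₁ := by
  have := h₁.finrank_le_negInertia hB
  have := h₂.finrank_add_negInertia_le hB
  omega

theorem eventually_negInertia_eq {n : ℕ} {A : Matrix (Fin n) (Fin n) ℝ} (hA : A.IsHermitian)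
    (hdet : A.det ≠ 0) : ∀ᶠ B in 𝓝 A, B.IsHermitian → negInertia B = negInertia A := by
  obtain ⟨W₁, W₂, h₁, h₂, hdim⟩ := hA.exists_definite_subspaces_of_det_ne_zero hdet
  rw [Fintype.card_fin] at hdim
  have hneg : {B : Matrix (Fin n) (Fin n) ℝ | (-B).PosDefOn W₁} ∈ 𝓝 A :=
    ((isOpen_setOf_posDefOn W₁).preimage continuous_neg).mem_nhds h₁
  filter_upwards [hneg, (isOpen_setOf_posDefOn W₂).mem_nhds h₂] with B h₁' h₂' hB
  rw [negInertia_eq_finrank_of_posDefOn hB h₁' h₂' hdim,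
    negInertia_eq_finrank_of_posDefOn hA h₁ h₂ hdim]

theorem index_locally_constant_off_spectral_variety (r N : ℕ)
    (Q : (Fin (r + 1) → ℝ) →ₗ[ℝ] Matrix (Fin (N + 1)) (Fin (N + 1)) ℝ)
    (hsymm : ∀ x, (Q x).IsSymm) :
    IsLocallyConstant
      (fun x : {x : Fin (r + 1) → ℝ // (Q x).det ≠ 0} => negInertia (Q x.val)) := by
  have hH : ∀ x, (Q x).IsHermitian := fun x => isHermitian_iff_isSymm.mpr (hsymm x)
  have hQ : Continuous fun x : {x // (Q x).det ≠ 0} => Q x.val :=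
    Q.continuous_of_finiteDimensional.comp continuous_subtype_val
  rw [IsLocallyConstant.iff_eventually_eq]
  rintro ⟨x₀, hdet⟩
  filter_upwards [hQ.continuousAt.eventually (eventually_negInertia_eq (hH x₀) hdet)]
    with x hx using hx (hH x)
end

section
/- Let Q₀, …, Q_r be real symmetric (N+1)×(N+1) matrices with quadratic forms q_i(u) = uᵀ Q_i u, let S^r = {x ∈ ℝ^{r+1} : ‖x‖ = 1} be the unit sphere, and for x ∈ S^r put q_x = ∑_i x_i q_i. Define the positive complement L₊ = { (x, [u]) ∈ S^r × ℝP^N : q_x(u) > 0 } (well defined since q_x(λu) = λ² q_x(u) for λ ≠ 0) and V_ℝ = { [u] ∈ ℝP^N : q_0(u) = ⋯ = q_r(u) = 0 }. Then the restriction to L₊ of the projection S^r × ℝP^N → ℝP^N is a homotopy equivalence onto ℝP^N \ V_ℝ: there exists a homotopy equivalence (ContinuousMap.HomotopyEquiv) between the subspace L₊ and the subspace ℝP^N \ V_ℝ whose forward map is (x,[u]) ↦ [u]. -/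
open Matrix

open Topology

/-- Topology on real projective space as a quotient of `(Fin n → ℝ) \ {0}`. -/
instance (n : ℕ) : TopologicalSpace (Projectivization ℝ (Fin n → ℝ)) :=
  inferInstanceAs (TopologicalSpace (Quotient (projectivizationSetoid ℝ (Fin n → ℝ))))

/-- The common real zero set of a family of quadrics in `ℝP^N`. -/
def quadZeros {N m : ℕ} (Q : Fin m → Matrix (Fin (N + 1)) (Fin (N + 1)) ℝ) :
    Set (Projectivization ℝ (Fin (N + 1) → ℝ)) :=
  {p | ∀ i, p.rep ⬝ᵥ (Q i).mulVec p.rep = 0}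

/-- Regular complete intersection: at every common complex zero `u ≠ 0` of the quadrics, the
gradients `Q_i u` are linearly independent over `ℂ`. -/
def IsRegularCI {N m : ℕ} (Q : Fin m → Matrix (Fin (N + 1)) (Fin (N + 1)) ℝ) : Prop :=
  ∀ u : Fin (N + 1) → ℂ, u ≠ 0 →
    (∀ i, u ⬝ᵥ ((Q i).map (Complex.ofReal)).mulVec u = 0) →
    LinearIndependent ℂ fun i => ((Q i).map (Complex.ofReal)).mulVec u

/-- The positive complement `L₊ ⊂ S^r × ℝP^N` of the Lagrange hypersurface:
pairs `(x, [u])` with `q_x(u) > 0`. -/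
def positiveComplement {N m : ℕ} (Q : Fin m → Matrix (Fin (N + 1)) (Fin (N + 1)) ℝ) :
    Set (Metric.sphere (0 : Fin m → ℝ) 1 × Projectivization ℝ (Fin (N + 1) → ℝ)) :=
  {p | 0 < ∑ i, (p.1 : Fin m → ℝ) i * (p.2.rep ⬝ᵥ (Q i).mulVec p.2.rep)}

noncomputable section Aux

namespace LagrangeAux

variable {N m : ℕ}

/-- The vector of values of the quadratic forms. -/
def qv (Q : Fin m → Matrix (Fin (N + 1)) (Fin (N + 1)) ℝ) (u : Fin (N + 1) → ℝ) :
    Fin m → ℝ := fun i => u ⬝ᵥ (Q i).mulVec u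

lemma qv_continuous (Q : Fin m → Matrix (Fin (N + 1)) (Fin (N + 1)) ℝ) :
    Continuous (qv Q) := by
  refine continuous_pi fun i => ?_
  have : (fun u : Fin (N + 1) → ℝ => qv Q u i)
      = fun u => ∑ j, ∑ k, u j * (Q i j k * u k) := by
    funext u
    simp [qv, dotProduct, Matrix.mulVec, Finset.mul_sum]
  rw [this]
  refine continuous_finset_sum _ fun j _ => continuous_finset_sum _ fun k _ => ?_
  exact (continuous_apply j).mul (continuous_const.mul (continuous_apply k))

lemma qv_smul (Q : Fin m → Matrix (Fin (N + 1)) (Fin (N + 1)) ℝ) (a : ℝ)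
    (u : Fin (N + 1) → ℝ) : qv Q (a • u) = (a ^ 2) • qv Q u := by
  funext i
  simp only [qv, Matrix.mulVec_smul, smul_dotProduct, dotProduct_smul, Pi.smul_apply,
    smul_eq_mul]
  ring

lemma qv_rep_mk (Q : Fin m → Matrix (Fin (N + 1)) (Fin (N + 1)) ℝ)
    (v : Fin (N + 1) → ℝ) (hv : v ≠ 0) :
    ∃ c : ℝ, 0 < c ∧ qv Q ((Projectivization.mk ℝ v hv).rep) = c • qv Q v := by
  obtain ⟨a, ha⟩ := Projectivization.exists_smul_eq_mk_rep ℝ v hv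
  have hane : (a : ℝ) ≠ 0 := a.ne_zero
  refine ⟨(a : ℝ) ^ 2, by positivity, ?_⟩
  rw [← ha, Units.smul_def, qv_smul]

lemma mem_compl_quadZeros_iff (Q : Fin m → Matrix (Fin (N + 1)) (Fin (N + 1)) ℝ)
    (p : Projectivization ℝ (Fin (N + 1) → ℝ)) :
    p ∈ (quadZeros Q)ᶜ ↔ qv Q p.rep ≠ 0 := by
  simp only [quadZeros, Set.mem_compl_iff, Set.mem_setOf_eq, qv, Ne, funext_iff]
  simp [qv]

lemma mk_mem_compl_quadZeros_iff (Q : Fin m → Matrix (Fin (N + 1)) (Fin (N + 1)) ℝ)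
    (v : Fin (N + 1) → ℝ) (hv : v ≠ 0) :
    Projectivization.mk ℝ v hv ∈ (quadZeros Q)ᶜ ↔ qv Q v ≠ 0 := by
  rw [mem_compl_quadZeros_iff]
  obtain ⟨c, hc, h⟩ := qv_rep_mk Q v hv
  rw [h, Ne, smul_eq_zero, not_or]
  simp [hc.ne']

/-- Normalization map. -/
def nrm (y : Fin m → ℝ) : Fin m → ℝ := ‖y‖⁻¹ • y

lemma nrm_smul (c : ℝ) (hc : 0 < c) (y : Fin m → ℝ) : nrm (c • y) = nrm y := by
  rcases eq_or_ne y 0 with rfl | hy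
  · simp [nrm]
  · have hy' : ‖y‖ ≠ 0 := norm_ne_zero_iff.mpr hy
    simp only [nrm, norm_smul, Real.norm_eq_abs, abs_of_pos hc, mul_inv, smul_smul]
    congr 1
    field_simp

lemma nrm_mem_sphere {y : Fin m → ℝ} (hy : y ≠ 0) :
    nrm y ∈ Metric.sphere (0 : Fin m → ℝ) 1 := by
  have hy' : ‖y‖ ≠ 0 := norm_ne_zero_iff.mpr hy
  rw [mem_sphere_zero_iff_norm, nrm, norm_smul]
  simp [abs_of_nonneg (norm_nonneg y), inv_mul_cancel₀ hy']

lemma nrm_of_norm_one {y : Fin m → ℝ} (hy : ‖y‖ = 1) : nrm y = y := by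
  simp [nrm, hy]

lemma nrm_dot (y s : Fin m → ℝ) :
    ∑ i, nrm y i * s i = ‖y‖⁻¹ * ∑ i, y i * s i := by
  rw [Finset.mul_sum]
  refine Finset.sum_congr rfl fun i _ => ?_
  simp [nrm, mul_assoc]

lemma dot_pos_ne_zero {y s : Fin m → ℝ} (h : 0 < ∑ i, y i * s i) : s ≠ 0 := by
  rintro rfl
  simp at h

lemma dot_pos_ne_zero' {y s : Fin m → ℝ} (h : 0 < ∑ i, y i * s i) : y ≠ 0 := by
  rintro rfl
  simp at h

lemma dot_self_pos {s : Fin m → ℝ} (hs : s ≠ 0) : 0 < ∑ i, s i * s i := by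
  obtain ⟨i, hi⟩ := Function.ne_iff.mp hs
  refine Finset.sum_pos' (fun j _ => mul_self_nonneg _) ⟨i, Finset.mem_univ i, ?_⟩
  exact mul_self_pos.mpr hi

lemma nrm_dot_self_pos {s : Fin m → ℝ} (hs : s ≠ 0) : 0 < ∑ i, nrm s i * s i := by
  rw [nrm_dot]
  exact mul_pos (inv_pos.mpr (norm_pos_iff.mpr hs)) (dot_self_pos hs)

end LagrangeAux

end Aux

open LagrangeAux in
theorem positiveComplement_homotopyEquiv_complement (r N : ℕ)
    (Q : Fin (r + 1) → Matrix (Fin (N + 1)) (Fin (N + 1)) ℝ)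
    (hsymm : ∀ i, (Q i).IsSymm) :
    ∃ e : ContinuousMap.HomotopyEquiv (positiveComplement Q)
        ((quadZeros Q)ᶜ : Set (Projectivization ℝ (Fin (N + 1) → ℝ))),
      ∀ p : positiveComplement Q,
        ((e.toFun p : ((quadZeros Q)ᶜ : Set (Projectivization ℝ (Fin (N + 1) → ℝ)))) :
            Projectivization ℝ (Fin (N + 1) → ℝ)) =
          (p : Metric.sphere (0 : Fin (r + 1) → ℝ) 1 ×
            Projectivization ℝ (Fin (N + 1) → ℝ)).2 := by
  classical
  set P := Projectivization ℝ (Fin (N + 1) → ℝ)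
  set X := { v : Fin (N + 1) → ℝ // v ≠ 0 }
  set Z : Set P := (quadZeros Q)ᶜ with hZ
  set L : Set (Metric.sphere (0 : Fin (r + 1) → ℝ) 1 × P) := positiveComplement Q with hL
  -- the quotient map
  let π : X → P := fun v => Projectivization.mk ℝ v.1 v.2
  have hπ : IsQuotientMap π := isQuotientMap_quotient_mk'
  -- membership facts
  have hmemL : ∀ z : L, 0 < ∑ i, (z.1.1 : Fin (r + 1) → ℝ) i
      * qv Q z.1.2.rep i := fun z => z.2
  have hmemZrep : ∀ p : Z, qv Q p.1.rep ≠ 0 := fun p =>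
    (mem_compl_quadZeros_iff Q p.1).mp p.2
  -- openness of Z
  have hopen : IsOpen Z := by
    rw [← hπ.isOpen_preimage]
    have : π ⁻¹' Z = {v : X | qv Q v.1 ≠ 0} := by
      ext v
      exact mk_mem_compl_quadZeros_iff Q v.1 v.2
    rw [this]
    exact isOpen_ne.preimage ((qv_continuous Q).comp continuous_subtype_val)
  -- the section map
  have hmemZ' : ∀ p : Z, nrm (qv Q p.1.rep) ∈ Metric.sphere (0 : Fin (r + 1) → ℝ) 1 :=
    fun p => nrm_mem_sphere (hmemZrep p)
  let n : Z → Metric.sphere (0 : Fin (r + 1) → ℝ) 1 :=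
    fun p => ⟨nrm (qv Q p.1.rep), hmemZ' p⟩
  -- n is well-defined via representatives
  have hnπ : ∀ w : X, nrm (qv Q (π w).rep) = nrm (qv Q w.1) := by
    intro w
    obtain ⟨c, hc, h⟩ := qv_rep_mk Q w.1 w.2
    rw [h, nrm_smul c hc]
  have hncont : Continuous n := by
    rw [(hπ.restrictPreimage_isOpen hopen).continuous_iff]
    have : (n ∘ Set.restrictPreimage Z π) =
        fun w : π ⁻¹' Z => (⟨nrm (qv Q w.1.1), by
          rw [← hnπ w.1]; exact hmemZ' ⟨π w.1, w.2⟩⟩ :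
          Metric.sphere (0 : Fin (r + 1) → ℝ) 1) := by
      funext w
      apply Subtype.ext
      exact hnπ w.1
    rw [this]
    have hq : Continuous fun w : π ⁻¹' Z => qv Q w.1.1 :=
      (qv_continuous Q).comp (continuous_subtype_val.comp continuous_subtype_val)
    have hne : ∀ w : π ⁻¹' Z, qv Q w.1.1 ≠ 0 := by
      intro w
      exact (mk_mem_compl_quadZeros_iff Q w.1.1 w.1.2).mp w.2
    refine Continuous.subtype_mk ?_ _
    exact ((hq.norm.inv₀ fun w => norm_ne_zero_iff.mpr (hne w)).smul hq)
  -- forward map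
  have hfmem : ∀ z : L, (z.1.2 : P) ∈ Z := by
    intro z
    rw [hZ, mem_compl_quadZeros_iff]
    exact dot_pos_ne_zero (hmemL z)
  let f : C(L, Z) := ⟨fun z => ⟨z.1.2, hfmem z⟩,
    Continuous.subtype_mk (continuous_snd.comp continuous_subtype_val) _⟩
  -- backward map
  have hgmem : ∀ p : Z, (n p, p.1) ∈ L := by
    intro p
    show 0 < ∑ i, (n p : Fin (r + 1) → ℝ) i * qv Q p.1.rep i
    exact nrm_dot_self_pos (hmemZrep p)
  let g : C(Z, L) := ⟨fun p => ⟨(n p, p.1), hgmem p⟩,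
    Continuous.subtype_mk (hncont.prodMk continuous_subtype_val) _⟩
  -- the homotopy from g ∘ f to id on L
  -- vector at time t
  let vt : unitInterval × L → Fin (r + 1) → ℝ := fun q =>
    (1 - (q.1 : ℝ)) • nrm (qv Q (q.2.1.2).rep)
      + (q.1 : ℝ) • ((q.2.1.1 : Fin (r + 1) → ℝ))
  have hvt_dot : ∀ q : unitInterval × L,
      0 < ∑ i, vt q i * qv Q (q.2.1.2).rep i := by
    intro ⟨t, z⟩
    set s := qv Q (z.1.2).rep with hs
    have hsne : s ≠ 0 := dot_pos_ne_zero (hmemL z)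
    have h1 : 0 < ∑ i, nrm s i * s i := nrm_dot_self_pos hsne
    have h2 : 0 < ∑ i, (z.1.1 : Fin (r + 1) → ℝ) i * s i := hmemL z
    have : ∑ i, vt (t, z) i * s i
        = (1 - (t : ℝ)) * (∑ i, nrm s i * s i)
          + (t : ℝ) * ∑ i, (z.1.1 : Fin (r + 1) → ℝ) i * s i := by
      rw [Finset.mul_sum, Finset.mul_sum, ← Finset.sum_add_distrib]
      refine Finset.sum_congr rfl fun i _ => ?_
      simp only [vt, Pi.add_apply, Pi.smul_apply, smul_eq_mul]
      ring
    rw [this]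
    have ht0 := t.2.1
    have ht1 := t.2.2
    rcases eq_or_lt_of_le ht1 with h | h
    · rw [h]
      simpa using h2
    · exact add_pos_of_pos_of_nonneg (mul_pos (by linarith) h1)
        (mul_nonneg ht0 h2.le)
  have hvtne : ∀ q : unitInterval × L, vt q ≠ 0 := fun q => dot_pos_ne_zero' (hvt_dot q)
  have hvt_cont : Continuous vt := by
    have h1 : Continuous fun q : unitInterval × L => nrm (qv Q (q.2.1.2).rep) := by
      have : (fun q : unitInterval × L => nrm (qv Q (q.2.1.2).rep))
          = (fun p : Z => nrm (qv Q p.1.rep)) ∘ (fun q => f q.2) := rfl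
      rw [this]
      exact (continuous_subtype_val.comp hncont).comp (f.continuous.comp continuous_snd)
    have h2 : Continuous fun q : unitInterval × L => (q.1 : ℝ) :=
      continuous_subtype_val.comp continuous_fst
    have h3 : Continuous fun q : unitInterval × L =>
        ((q.2.1.1 : Fin (r + 1) → ℝ)) :=
      continuous_subtype_val.comp
        (continuous_fst.comp (continuous_subtype_val.comp continuous_snd))
    exact (((continuous_const.sub h2).smul h1).add (h2.smul h3))
  have hH_mem : ∀ q : unitInterval × L,
      ((⟨nrm (vt q), nrm_mem_sphere (hvtne q)⟩ : Metric.sphere (0 : Fin (r + 1) → ℝ) 1),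
        q.2.1.2) ∈ L := by
    intro q
    show 0 < ∑ i, nrm (vt q) i * qv Q (q.2.1.2).rep i
    rw [nrm_dot]
    exact mul_pos (inv_pos.mpr (norm_pos_iff.mpr (hvtne q))) (hvt_dot q)
  let H : ContinuousMap.Homotopy (g.comp f) (ContinuousMap.id L) :=
    { toFun := fun q => ⟨(⟨nrm (vt q), nrm_mem_sphere (hvtne q)⟩, q.2.1.2),
        hH_mem q⟩
      continuous_toFun := by
        refine Continuous.subtype_mk ?_ _
        refine Continuous.prodMk (Continuous.subtype_mk ?_ _) ?_
        · exact (hvt_cont.norm.inv₀ fun q =>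
            norm_ne_zero_iff.mpr (hvtne q)).smul hvt_cont
        · exact continuous_snd.comp (continuous_subtype_val.comp continuous_snd)
      map_zero_left := by
        intro z
        apply Subtype.ext
        refine Prod.ext (Subtype.ext ?_) rfl
        show nrm (vt (0, z)) = nrm (qv Q (z.1.2).rep)
        have : vt (0, z) = nrm (qv Q (z.1.2).rep) := by
          simp [vt]
        rw [this]
        exact nrm_of_norm_one (mem_sphere_zero_iff_norm.mp
          (hmemZ' ⟨z.1.2, hfmem z⟩))
      map_one_left := by
        intro z
        apply Subtype.ext
        refine Prod.ext (Subtype.ext ?_) rfl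
        show nrm (vt (1, z)) = ((z.1.1 : Fin (r + 1) → ℝ))
        have : vt (1, z) = ((z.1.1 : Fin (r + 1) → ℝ)) := by
          simp [vt]
        rw [this]
        exact nrm_of_norm_one (mem_sphere_zero_iff_norm.mp z.1.1.2) }
  have hfg : f.comp g = ContinuousMap.id Z := by
    ext p
    rfl
  refine ⟨⟨f, g, ⟨H⟩, ?_⟩, fun p => rfl⟩
  rw [hfg]
end
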